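/- Let F(X) be a finitely generated free group and S ≤ F(X) a finitely generated subgroup. Then the full preimage π⁻¹(S) ⊆ (X ∪ X⁻¹)* is a visibly pushdown language (for some partition) if and only if S has finite index in F(X), in which case π⁻¹(S) is in fact regular. -/

import Mathlib

inductive VKind | call | internal | response
deriving DecidableEq

/-- A (nondeterministic) visibly pushdown automaton over alphabet `A`
partitioned by `kind` into call, internal and response letters. -/
structure VPA (A : Type) (kind : A → VKind) where
  Q : Type
  Γ : Type
  [finQ : Fintype Q]
  [finΓ : Fintype Γ]
  init : Q
  accept : Set Q
  /-- transitions on call letters: push one symbol, do not inspect the stack -/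
  δc : Q → A → Set (Q × Γ)
  /-- transitions on internal letters: do not inspect or modify the stack -/
  δi : Q → A → Set Q
  /-- transitions on response letters: pop the topmost stack symbol -/
  δr : Q → A → Γ → Set Q
  /-- transitions on response letters read on the empty stack (bottom symbol) -/
  δb : Q → A → Set Q

namespace VPA

variable {A : Type} {kind : A → VKind}

inductive Steps (M : VPA A kind) : M.Q × List M.Γ → List A → M.Q × List M.Γ → Prop
  | nil (c) : Steps M c [] c
  | call {q s a q' γ w c} : kind a = .call → (q', γ) ∈ M.δc q a →
      Steps M (q', γ :: s) w c → Steps M (q, s) (a :: w) c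
  | internal {q s a q' w c} : kind a = .internal → q' ∈ M.δi q a →
      Steps M (q', s) w c → Steps M (q, s) (a :: w) c
  | pop {q γ s a q' w c} : kind a = .response → q' ∈ M.δr q a γ →
      Steps M (q', s) w c → Steps M (q, γ :: s) (a :: w) c
  | popEmpty {q a q' w c} : kind a = .response → q' ∈ M.δb q a →
      Steps M (q', []) w c → Steps M (q, []) (a :: w) c

/-- A VPA accepts a word if reading it from the initial state with empty stack
can end in an accepting state (with arbitrary stack contents). -/
def Accepts (M : VPA A kind) (w : List A) : Prop :=
  ∃ c : M.Q × List M.Γ, M.Steps (M.init, []) w c ∧ c.1 ∈ M.accept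

end VPA

/-- `L` is a visibly pushdown language over the partition `kind`. -/
def IsVPL {A : Type} (kind : A → VKind) (L : Set (List A)) : Prop :=
  ∃ M : VPA A kind, L = {w | M.Accepts w}

/-- Projection from words over X ⊔ X⁻¹ to the free group F(X). -/
def projFree {X : Type} (w : List (X ⊕ X)) : FreeGroup X :=
  (w.map (Sum.elim (fun x => FreeGroup.of x) (fun x => (FreeGroup.of x)⁻¹))).prod

/-!
If `S` has finite index, the cosets `F(X) ⧸ S` are the states of a DFA for `π⁻¹(S)`, and a DFA
is a VPA all of whose letters are internal.

Conversely, let `S` be finitely generated. If every letter `x` acts with finite orbits on the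
cosets, then every Schreier-graph edge at a coset `gS` is crossed by the path of a loop
`g⁻¹ xᵐ g ∈ S` at the base coset, hence (counting crossings with signs) by the path of one of the
finitely many generators of `S`; so there are only finitely many cosets. Hence if `S` has infinite
index, some `x` has an infinite orbit through some coset `gS`, and for words `u`, `v` spelling
`g⁻¹`, `g`, the language `π⁻¹(S)` meets both `u x* (x⁻¹)* v` and `u (x⁻¹)* x* v` exactly in
their balanced words. No VPA does this: in a slice `u aⁿ bᵐ v` whose second letter `b` is a call,
the suffix `bⁿ v` cannot see the stack, and otherwise the slice `u bⁿ aᵐ v` keeps the stack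
bounded after `u bⁿ`; either way a pigeonhole argument produces an accepted unbalanced word.
-/

open FreeGroup MulAction

theorem isRegular_preimage_prod_of_finiteIndex {A G : Type*} [Group G] (f : A → G)
    (S : Subgroup G) [S.FiniteIndex] :
    Language.IsRegular (({w | (w.map f).prod ∈ S} : Set (List A)) : Language A) := by
  have : Finite (G ⧸ S) := Subgroup.finite_quotient_of_finiteIndex
  -- the left quotient by `x` only depends on the coset `(x.map f).prod⁻¹ • S`
  let quotientOf : G ⧸ S → Language A :=
    fun q => {y | ((y.map f).prod)⁻¹ • q = ((1 : G) : G ⧸ S)}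
  refine .of_finite_range_leftQuotient ((Set.finite_range quotientOf).subset ?_)
  rintro _ ⟨x, rfl⟩
  refine ⟨((x.map f).prod)⁻¹ • ((1 : G) : G ⧸ S), ?_⟩
  ext y
  change _ ↔ ((x ++ y).map f).prod ∈ S
  have hmem (g : G) : g ∈ S ↔ g • ((1 : G) : G ⧸ S) = ((1 : G) : G ⧸ S) := by
    rw [← mem_stabilizer_iff, stabilizer_quotient]
  rw [List.map_append, List.prod_append, ← inv_mem_iff, hmem, mul_inv_rev, mul_smul]
  rfl

def DFA.toVPA {A σ : Type} [Fintype σ] (M : DFA A σ) : VPA A (fun _ => .internal) where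
  Q := σ
  Γ := Unit
  init := M.start
  accept := M.accept
  δc _ _ := ∅
  δi q a := {M.step q a}
  δr _ _ _ := ∅
  δb _ _ := ∅

theorem DFA.toVPA_steps_iff {A σ : Type} [Fintype σ] (M : DFA A σ) {w : List A} {q : σ}
    {s : List Unit} {c : σ × List Unit} :
    M.toVPA.Steps (q, s) w c ↔ c = (M.evalFrom q w, s) := by
  induction w generalizing q with
  | nil => exact ⟨fun h => by cases h; rfl, fun h => h ▸ .nil _⟩
  | cons a w ih =>
    constructor
    · intro h
      cases h with
      | internal _ hq h => obtain rfl := Set.mem_singleton_iff.1 hq; exact ih.1 h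
      | call hk | pop hk | popEmpty hk => cases hk
    · rintro rfl
      exact .internal rfl rfl (ih.2 rfl)

theorem isVPL_of_isRegular {A : Type} {L : Set (List A)}
    (h : Language.IsRegular (L : Language A)) : IsVPL (fun _ => .internal) L := by
  obtain ⟨σ, _, M, rfl⟩ := h
  refine ⟨M.toVPA, Set.ext fun w => ⟨fun hw => ⟨_, M.toVPA_steps_iff.2 rfl, hw⟩, ?_⟩⟩
  rintro ⟨c, hc, hacc⟩
  rw [M.toVPA_steps_iff.1 hc] at hacc
  exact hacc

/-- `L ∩ u a* b* v = {u aⁿ bⁿ v | n}`, a copy of the word problem of `ℤ` inside `L`. -/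
def BalancedSlice {A : Type*} (L : Set (List A)) (u v : List A) (a b : A) : Prop :=
  ∀ n m : ℕ, (u ++ List.replicate n a) ++ (List.replicate m b ++ v) ∈ L ↔ n = m

namespace VPA

variable {A : Type} {kind : A → VKind} {M : VPA A kind}

def AcceptsFrom (M : VPA A kind) (c : M.Q × List M.Γ) (w : List A) : Prop :=
  ∃ c', M.Steps c w c' ∧ c'.1 ∈ M.accept

theorem Steps.append {c₁ c₂ c₃ : M.Q × List M.Γ} {w₁ w₂ : List A}
    (h₁ : M.Steps c₁ w₁ c₂) (h₂ : M.Steps c₂ w₂ c₃) : M.Steps c₁ (w₁ ++ w₂) c₃ := by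
  induction h₁ with
  | nil => exact h₂
  | call hk hδ _ ih => exact .call hk hδ (ih h₂)
  | internal hk hδ _ ih => exact .internal hk hδ (ih h₂)
  | pop hk hδ _ ih => exact .pop hk hδ (ih h₂)
  | popEmpty hk hδ _ ih => exact .popEmpty hk hδ (ih h₂)

theorem steps_append_iff {c₁ c₃ : M.Q × List M.Γ} {w₁ w₂ : List A} :
    M.Steps c₁ (w₁ ++ w₂) c₃ ↔ ∃ c₂, M.Steps c₁ w₁ c₂ ∧ M.Steps c₂ w₂ c₃ := by
  refine ⟨fun h => ?_, fun ⟨_, h₁, h₂⟩ => h₁.append h₂⟩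
  induction w₁ generalizing c₁ with
  | nil => exact ⟨c₁, .nil _, h⟩
  | cons a w₁ ih =>
    cases h with
    | call hk hδ h => obtain ⟨c₂, h₁, h₂⟩ := ih h; exact ⟨c₂, .call hk hδ h₁, h₂⟩
    | internal hk hδ h => obtain ⟨c₂, h₁, h₂⟩ := ih h; exact ⟨c₂, .internal hk hδ h₁, h₂⟩
    | pop hk hδ h => obtain ⟨c₂, h₁, h₂⟩ := ih h; exact ⟨c₂, .pop hk hδ h₁, h₂⟩
    | popEmpty hk hδ h => obtain ⟨c₂, h₁, h₂⟩ := ih h; exact ⟨c₂, .popEmpty hk hδ h₁, h₂⟩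

theorem acceptsFrom_append_iff {c : M.Q × List M.Γ} {w₁ w₂ : List A} :
    M.AcceptsFrom c (w₁ ++ w₂) ↔ ∃ c', M.Steps c w₁ c' ∧ M.AcceptsFrom c' w₂ := by
  simp only [AcceptsFrom, steps_append_iff]
  exact ⟨fun ⟨c'', ⟨c', h₁, h₂⟩, h⟩ => ⟨c', h₁, c'', h₂, h⟩,
    fun ⟨c', h₁, c'', h₂, h⟩ => ⟨c'', ⟨c', h₁, h₂⟩, h⟩⟩

theorem Steps.length_le {c c' : M.Q × List M.Γ} {w : List A} (h : M.Steps c w c') :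
    c'.2.length ≤ c.2.length + w.length := by
  induction h with
  | nil => simp
  | _ => simp only [List.length_cons] at *; omega

theorem Steps.length_le_of_forall_ne_call {c c' : M.Q × List M.Γ} {w : List A}
    (h : M.Steps c w c') (hw : ∀ a ∈ w, kind a ≠ .call) : c'.2.length ≤ c.2.length := by
  induction h with
  | nil => rfl
  | call hk => exact absurd hk (hw _ List.mem_cons_self)
  | internal _ _ _ ih => exact ih fun a ha => hw a (List.mem_cons_of_mem _ ha)
  | pop _ _ _ ih => exact (ih fun a ha => hw a (List.mem_cons_of_mem _ ha)).trans (by simp)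
  | popEmpty _ _ _ ih => exact ih fun a ha => hw a (List.mem_cons_of_mem _ ha)

theorem Steps.exists_push_of_forall_call {q q' : M.Q} {s r : List M.Γ} {w : List A}
    (h : M.Steps (q, s) w (q', r)) (hw : ∀ a ∈ w, kind a = .call) :
    ∃ p : List M.Γ, p.length = w.length ∧ r = p ++ s ∧ ∀ t, M.Steps (q, t) w (q', p ++ t) := by
  generalize hc : (q, s) = c at h
  generalize hc' : (q', r) = c' at h
  induction h generalizing q s with
  | nil =>
    obtain ⟨rfl, rfl⟩ := Prod.ext_iff.1 (hc.trans hc'.symm)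
    exact ⟨[], rfl, rfl, fun _ => .nil _⟩
  | @call _ _ _ _ γ _ _ hk hδ _ ih =>
    cases hc
    obtain ⟨p, hp, rfl, h⟩ := ih (fun a ha => hw a (List.mem_cons_of_mem _ ha)) rfl hc'
    exact ⟨p ++ [γ], by simp [hp], by simp, fun t => .call hk hδ (by simpa using h (γ :: t))⟩
  | internal hk | pop hk | popEmpty hk => exact absurd (hw _ List.mem_cons_self) (by simp [hk])

/-- A run that reads at most `p.length` letters never looks below the top `p` of the stack. -/
theorem Steps.change_bottom {q q' : M.Q} {p s r : List M.Γ} {w : List A}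
    (h : M.Steps (q, p ++ s) w (q', r)) (hw : w.length ≤ p.length) (t : List M.Γ) :
    ∃ r', M.Steps (q, p ++ t) w (q', r') := by
  generalize hc : (q, p ++ s) = c at h
  generalize hc' : (q', r) = c' at h
  induction h generalizing q p with
  | nil =>
    obtain ⟨rfl, -⟩ := Prod.ext_iff.1 (hc.trans hc'.symm)
    exact ⟨_, .nil _⟩
  | call hk hδ _ ih =>
    cases hc
    obtain ⟨r', h⟩ := ih (p := _ :: p) (by simp at hw ⊢; omega) rfl hc'
    exact ⟨r', .call hk hδ h⟩
  | internal hk hδ _ ih =>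
    cases hc
    obtain ⟨r', h⟩ := ih (by simp at hw; omega) rfl hc'
    exact ⟨r', .internal hk hδ h⟩
  | pop hk hδ _ ih =>
    obtain ⟨rfl, hs⟩ := Prod.ext_iff.1 hc
    obtain _ | ⟨γ, p⟩ := p
    · simp at hw
    · obtain ⟨rfl, rfl⟩ := List.cons_eq_cons.1 hs
      obtain ⟨r', h⟩ := ih (by simpa using hw) rfl hc'
      exact ⟨r', .pop hk hδ h⟩
  | popEmpty =>
    obtain ⟨rfl, -⟩ : p = [] ∧ s = [] := by simpa [eq_comm] using congrArg Prod.snd hc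
    simp at hw

/-- After `v` has pushed at least `w.length` symbols, `w` cannot reach the original stack. -/
theorem AcceptsFrom.change_stack_of_forall_call {q : M.Q} {s : List M.Γ} {v w : List A}
    (h : M.AcceptsFrom (q, s) (v ++ w)) (hv : ∀ a ∈ v, kind a = .call)
    (hvw : w.length ≤ v.length) (t : List M.Γ) : M.AcceptsFrom (q, t) (v ++ w) := by
  obtain ⟨⟨q₁, s₁⟩, hv', c, hw, hc⟩ := acceptsFrom_append_iff.1 h
  obtain ⟨p, hp, rfl, hpush⟩ := hv'.exists_push_of_forall_call hv
  obtain ⟨r, hw'⟩ := hw.change_bottom (hp ▸ hvw) t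
  exact acceptsFrom_append_iff.2 ⟨_, hpush t, _, hw', hc⟩

theorem not_balancedSlice_of_ne_call {u v : List A} {a b : A}
    (ha : kind a ≠ .call) : ¬ BalancedSlice {w | M.Accepts w} u v a b := by
  intro hL
  have := M.finQ
  have := M.finΓ
  let Low : Set (M.Q × List M.Γ) := {c | c.2.length ≤ u.length}
  have : Finite Low := ((Set.finite_univ (α := M.Q)).prod (List.finite_length_le M.Γ u.length)
    |>.subset fun c hc => ⟨trivial, hc⟩).to_subtype
  -- after `u aⁿ` the stack is no higher than after `u`, so only finitely many configurations occur
  have hmid (n : ℕ) : ∃ c : Low, M.Steps (M.init, []) (u ++ List.replicate n a) c ∧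
      M.AcceptsFrom c (List.replicate n b ++ v) := by
    obtain ⟨c, hc, hacc⟩ := acceptsFrom_append_iff.1 ((hL n n).2 rfl)
    obtain ⟨c₀, hu, han⟩ := steps_append_iff.1 hc
    have hlow := han.length_le_of_forall_ne_call fun _ h => List.eq_of_mem_replicate h ▸ ha
    exact ⟨⟨c, hlow.trans (by simpa using hu.length_le)⟩, hc, hacc⟩
  choose c hc hacc using hmid
  obtain ⟨n, n', hne, heq⟩ := Finite.exists_ne_map_eq_of_infinite c
  refine hne ((hL n' n).1 (acceptsFrom_append_iff.2 ⟨c n', hc n', ?_⟩)).symm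
  exact heq ▸ hacc n

theorem not_balancedSlice_of_call {u v : List A} {a b : A}
    (hb : kind b = .call) : ¬ BalancedSlice {w | M.Accepts w} u v a b := by
  intro hL
  have : Finite M.Q := M.finQ.finite
  -- `b^N v` with `N ≥ |v|` never reaches the stack left by `u a^N`, so only the state matters
  have hmid (n : ℕ) : ∃ c, M.Steps (M.init, []) (u ++ List.replicate (n + v.length) a) c ∧
      M.AcceptsFrom c (List.replicate (n + v.length) b ++ v) :=
    acceptsFrom_append_iff.1 ((hL _ _).2 rfl)
  choose c hc hacc using hmid
  obtain ⟨n, n', hne, heq⟩ := Finite.exists_ne_map_eq_of_infinite fun n => (c n).1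
  have hacc' : M.AcceptsFrom ((c n').1, (c n').2) (List.replicate (n + v.length) b ++ v) :=
    heq ▸ (hacc n).change_stack_of_forall_call (fun _ h => List.eq_of_mem_replicate h ▸ hb)
      (by simp) (c n').2
  have := (hL (n' + v.length) (n + v.length)).1 (acceptsFrom_append_iff.2 ⟨c n', hc n', hacc'⟩)
  omega

theorem _root_.IsVPL.not_balancedSlice_and_balancedSlice {L : Set (List A)} (hL : IsVPL kind L)
    (u v : List A) (a b : A) : ¬ (BalancedSlice L u v a b ∧ BalancedSlice L u v b a) := by
  obtain ⟨M, rfl⟩ := hL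
  rintro ⟨hab, hba⟩
  by_cases hb : kind b = .call
  · exact not_balancedSlice_of_call hb hab
  · exact not_balancedSlice_of_ne_call hb hba

end VPA

namespace FreeGroup

variable {X Ω : Type*} [MulAction (FreeGroup X) Ω]

/-- Schreier-graph edges are indexed by `(ν, x)`, for the edge from `ν` to `of x • ν`; reading
`p` at `ν` crosses one of them, forwards (`+1`) exactly when `p.2`. -/
noncomputable def letterFlow (p : X × Bool) (ν : Ω) : Ω × X →₀ ℤ :=
  if p.2 then .single (ν, p.1) 1 else -.single ((of p.1)⁻¹ • ν, p.1) 1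

/-- Words act from the right end, so the last letter is read first. -/
noncomputable def wordFlow : List (X × Bool) → Ω → Ω × X →₀ ℤ
  | [], _ => 0
  | p :: w, ω => wordFlow w ω + letterFlow p (mk w • ω)

theorem wordFlow_append (w₁ w₂ : List (X × Bool)) (ω : Ω) :
    wordFlow (w₁ ++ w₂) ω = wordFlow w₂ ω + wordFlow w₁ (mk w₂ • ω) := by
  induction w₁ with
  | nil => simp [wordFlow]
  | cons p w₁ ih =>
    simp only [List.cons_append, wordFlow, ih, ← mul_mk, mul_smul]
    abel

theorem letterFlow_add_letterFlow_not (x : X) (b : Bool) (ν : Ω) :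
    letterFlow (x, !b) ν + letterFlow (x, b) (mk [(x, !b)] • ν) = 0 := by
  have hinv : mk [(x, false)] = (of x)⁻¹ := by simp [of, inv_mk, invRev]
  cases b
  · change letterFlow (x, true) ν + letterFlow (x, false) (of x • ν) = 0
    simp [letterFlow]
  · change letterFlow (x, false) ν + letterFlow (x, true) (mk [(x, false)] • ν) = 0
    simp [letterFlow, hinv]

theorem wordFlow_eq_of_red_step {w₁ w₂ : List (X × Bool)} (h : Red.Step w₁ w₂) (ω : Ω) :
    wordFlow w₁ ω = wordFlow w₂ ω := by
  obtain @⟨L₁, L₂, x, b⟩ := h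
  have hcancel : mk ((x, b) :: (x, !b) :: L₂) = mk L₂ := Quot.sound Red.Step.cons_not
  have hcons : mk ((x, !b) :: L₂) = mk [(x, !b)] * mk L₂ := by rw [mul_mk]; rfl
  rw [wordFlow_append, wordFlow_append, hcancel]
  simp only [wordFlow, hcons, mul_smul, add_assoc, letterFlow_add_letterFlow_not, add_zero]

/-- The signed number of times the path of `g` in the Schreier graph, starting at `ω`,
crosses each edge. -/
noncomputable def flow (g : FreeGroup X) (ω : Ω) : Ω × X →₀ ℤ :=
  Quot.liftOn g (wordFlow · ω) fun _ _ h => wordFlow_eq_of_red_step h ω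

theorem flow_one (ω : Ω) : flow (1 : FreeGroup X) ω = 0 := rfl

theorem flow_mul (g h : FreeGroup X) (ω : Ω) : flow (g * h) ω = flow h ω + flow g (h • ω) := by
  induction g using Quot.ind
  induction h using Quot.ind
  exact wordFlow_append ..

theorem flow_inv (g : FreeGroup X) (ω : Ω) : flow g⁻¹ ω = -flow g (g⁻¹ • ω) := by
  have := flow_mul g g⁻¹ ω
  rw [mul_inv_cancel, flow_one] at this
  exact eq_neg_of_add_eq_zero_left this.symm

theorem flow_of (x : X) (ω : Ω) : flow (of x) ω = .single (ω, x) 1 := by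
  simp [flow, of, wordFlow, letterFlow, ← one_eq_mk]

theorem flow_conj {g h : FreeGroup X} {ω : Ω} (hfix : h • g • ω = g • ω) :
    flow (g⁻¹ * h * g) ω = flow h (g • ω) := by
  rw [flow_mul, flow_mul, flow_inv, hfix, inv_smul_smul]
  abel

theorem flow_of_pow_succ (x : X) (m : ℕ) (ω : Ω) :
    flow (of x ^ (m + 1)) ω = .single (ω, x) 1 + flow (of x ^ m) (of x • ω) := by
  rw [pow_succ, flow_mul, flow_of]

theorem flow_of_pow_nonneg (x : X) (m : ℕ) (ω : Ω) : 0 ≤ flow (of x ^ m) ω := by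
  induction m generalizing ω with
  | zero => exact (flow_one ω).ge
  | succ m ih =>
    rw [flow_of_pow_succ]
    exact add_nonneg (Finsupp.single_nonneg.2 zero_le_one) (ih _)

theorem mem_support_flow_of_pow_succ (x : X) (m : ℕ) (ω : Ω) :
    (ω, x) ∈ (flow (of x ^ (m + 1)) ω).support := by
  rw [Finsupp.mem_support_iff, flow_of_pow_succ, Finsupp.add_apply, Finsupp.single_eq_same]
  have : (0 : ℤ) ≤ flow (of x ^ m) (of x • ω) (ω, x) := flow_of_pow_nonneg x m (of x • ω) (ω, x)
  omega

theorem flow_mem_span_of_mem_closure {T : Set (FreeGroup X)} {ω : Ω}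
    (hT : T ⊆ stabilizer (FreeGroup X) ω) {s : FreeGroup X} (hs : s ∈ Subgroup.closure T) :
    flow s ω ∈ Submodule.span ℤ ((flow · ω) '' T) := by
  have hstab : Subgroup.closure T ≤ stabilizer _ ω := (Subgroup.closure_le _).2 hT
  induction hs using Subgroup.closure_induction with
  | mem t ht => exact Submodule.subset_span ⟨t, ht, rfl⟩
  | one => rw [flow_one]; exact zero_mem _
  | mul a b _ hb iha ihb =>
    rw [flow_mul, mem_stabilizer_iff.1 (hstab hb)]
    exact add_mem ihb iha
  | inv a ha iha =>
    rw [flow_inv, mem_stabilizer_iff.1 (inv_mem (hstab ha))]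
    exact neg_mem iha

/-- Every edge at a point `g • ω₀` is crossed by the loop `g⁻¹ xᵐ g` at `ω₀`, whose flow is
supported where the flows of the finitely many generators of the stabilizer are. -/
theorem finite_orbit_of_fg_stabilizer {ω₀ : Ω} (hfg : (stabilizer (FreeGroup X) ω₀).FG)
    (h : ∀ (x : X) (ω : Ω), 0 < period (of x) ω) : (orbit (FreeGroup X) ω₀).Finite := by
  obtain ⟨T, hT⟩ := hfg
  let K : Set (Ω × X) := ⋃ t ∈ (T : Set (FreeGroup X)), ↑(flow t ω₀).support
  have hK : K.Finite := T.finite_toSet.biUnion fun t _ => (flow t ω₀).support.finite_toSet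
  have hspan : Submodule.span ℤ ((flow · ω₀) '' T) ≤ Finsupp.supported ℤ ℤ K := by
    refine Submodule.span_le.2 ?_
    rintro _ ⟨t, ht, rfl⟩
    exact (Finsupp.mem_supported _ _).2
      (Set.subset_biUnion_of_mem (u := fun t => ((flow t ω₀).support : Set (Ω × X))) ht)
  have hedge (g : FreeGroup X) (x : X) : (g • ω₀, x) ∈ K := by
    obtain ⟨m, hm⟩ := Nat.exists_eq_add_one.2 (h x (g • ω₀))
    have hfix : of x ^ (m + 1) • g • ω₀ = g • ω₀ := by rw [← hm]; exact pow_period_smul _ _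
    have hs : g⁻¹ * of x ^ (m + 1) * g ∈ Subgroup.closure (T : Set (FreeGroup X)) := by
      rw [hT, mem_stabilizer_iff, mul_smul, mul_smul, hfix, inv_smul_smul]
    have := hspan (flow_mem_span_of_mem_closure (hT ▸ Subgroup.subset_closure) hs)
    rw [flow_conj hfix, Finsupp.mem_supported] at this
    exact this (mem_support_flow_of_pow_succ x m _)
  cases isEmpty_or_nonempty X with
  | inl =>
    exact (Set.finite_singleton ω₀).subset (by rintro _ ⟨g, rfl⟩; simp [Subsingleton.elim g 1])
  | inr hX =>
    obtain ⟨x⟩ := hX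
    exact (hK.image Prod.fst).subset (by rintro _ ⟨g, rfl⟩; exact ⟨_, hedge g x, rfl⟩)

end FreeGroup

theorem Subgroup.finiteIndex_of_forall_period_pos {X : Type*} {S : Subgroup (FreeGroup X)}
    (hfg : S.FG) (h : ∀ (x : X) (ω : FreeGroup X ⧸ S), 0 < period (of x) ω) : S.FiniteIndex := by
  have hfin := FreeGroup.finite_orbit_of_fg_stabilizer (X := X)
    (ω₀ := ((1 : FreeGroup X) : FreeGroup X ⧸ S)) (by rwa [stabilizer_quotient]) h
  rw [orbit_eq_univ, Set.finite_univ_iff] at hfin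
  exact Subgroup.finiteIndex_of_finite_quotient

theorem conj_zpow_mem_iff_period_dvd {G : Type*} [Group G] (S : Subgroup G) (g h : G) (k : ℤ) :
    g⁻¹ * h ^ k * g ∈ S ↔ (period h (g : G ⧸ S) : ℤ) ∣ k := by
  rw [← zpow_smul_eq_iff_period_dvd, MulAction.Quotient.smul_mk, smul_eq_mul, eq_comm,
    QuotientGroup.eq, mul_assoc]

section projFree

variable {X : Type}

theorem projFree_append (w₁ w₂ : List (X ⊕ X)) :
    projFree (w₁ ++ w₂) = projFree w₁ * projFree w₂ := by
  simp [projFree]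

theorem projFree_replicate (n : ℕ) (a : X ⊕ X) :
    projFree (List.replicate n a) = projFree [a] ^ n := by
  simp [projFree]

theorem projFree_surjective : Function.Surjective (projFree (X := X)) := by
  intro g
  induction g using FreeGroup.induction_on with
  | C1 => exact ⟨[], rfl⟩
  | of x => exact ⟨[.inl x], by simp [projFree]⟩
  | inv_of x _ => exact ⟨[.inr x], by simp [projFree]⟩
  | mul g h hg hh =>
    obtain ⟨u, rfl⟩ := hg
    obtain ⟨v, rfl⟩ := hh
    exact ⟨u ++ v, projFree_append u v⟩

theorem balancedSlice_preimage_projFree {S : Subgroup (FreeGroup X)} {u v : List (X ⊕ X)}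
    {a b : X ⊕ X} (huv : projFree u = (projFree v)⁻¹) (hab : projFree [b] = (projFree [a])⁻¹)
    (hper : period (projFree [a]) (projFree v : FreeGroup X ⧸ S) = 0) :
    BalancedSlice (projFree ⁻¹' S) u v a b := by
  intro n m
  have hword : projFree ((u ++ List.replicate n a) ++ (List.replicate m b ++ v)) =
      (projFree v)⁻¹ * projFree [a] ^ ((n : ℤ) - m) * projFree v := by
    rw [projFree_append, projFree_append, projFree_append, projFree_replicate,
      projFree_replicate, huv, hab, zpow_sub, zpow_natCast, zpow_natCast, inv_pow]
    group
  rw [Set.mem_preimage, SetLike.mem_coe, hword, conj_zpow_mem_iff_period_dvd, hper,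
    Nat.cast_zero, zero_dvd_iff]
  omega

end projFree

theorem subgroup_VPLforall_iff_finiteIndex_general {X : Type}
    (S : Subgroup (FreeGroup X)) (hfg : S.FG) :
    ((∃ kind : (X ⊕ X) → VKind,
        IsVPL kind (projFree ⁻¹' (S : Set (FreeGroup X)))) ↔ S.FiniteIndex) ∧
    (S.FiniteIndex →
      Language.IsRegular
        ((projFree ⁻¹' (S : Set (FreeGroup X)) : Set (List (X ⊕ X))) : Language (X ⊕ X))) := by
  have hreg : S.FiniteIndex → Language.IsRegular
      ((projFree ⁻¹' (S : Set (FreeGroup X)) : Set (List (X ⊕ X))) : Language (X ⊕ X)) :=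
    fun _ => isRegular_preimage_prod_of_finiteIndex _ S
  refine ⟨⟨fun ⟨kind, hL⟩ => ?_, fun hfi => ⟨_, isVPL_of_isRegular (hreg hfi)⟩⟩, hreg⟩
  by_contra hfi
  obtain ⟨x, ω, hx⟩ : ∃ (x : X) (ω : FreeGroup X ⧸ S), period (of x) ω = 0 := by
    by_contra! h
    exact hfi (S.finiteIndex_of_forall_period_pos hfg fun x ω => Nat.pos_of_ne_zero (h x ω))
  obtain ⟨v, rfl⟩ := (QuotientGroup.mk_surjective.comp projFree_surjective) ω
  obtain ⟨u, hu⟩ := projFree_surjective (projFree v)⁻¹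
  have hinv : projFree [.inr x] = (projFree [.inl x])⁻¹ := by simp [projFree]
  have hx' : period (projFree [.inl x]) (projFree v : FreeGroup X ⧸ S) = 0 := by
    simpa [projFree] using hx
  exact hL.not_balancedSlice_and_balancedSlice u v (.inl x) (.inr x)
    ⟨balancedSlice_preimage_projFree hu hinv hx',
      balancedSlice_preimage_projFree hu (by rw [hinv, inv_inv]) (by rwa [hinv, period_inv])⟩

/-- For a finitely generated subgroup S of a finitely generated free group,
the full preimage of S is a VPL (for some partition) if and only if S has
finite index, in which case the full preimage is in fact regular. -/
theorem subgroup_VPLforall_iff_finiteIndex {X : Type} [Fintype X]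
    (S : Subgroup (FreeGroup X)) (hfg : S.FG) :
    ((∃ kind : (X ⊕ X) → VKind,
        IsVPL kind (projFree ⁻¹' (S : Set (FreeGroup X)))) ↔ S.FiniteIndex) ∧
    (S.FiniteIndex →
      Language.IsRegular
        ((projFree ⁻¹' (S : Set (FreeGroup X)) : Set (List (X ⊕ X))) : Language (X ⊕ X))) :=
  subgroup_VPLforall_iff_finiteIndex_general S hfg
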